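/- Let κ be a measurable cardinal. Then κ ≤ r^cl_κ ≤ u^cl*_κ ≤ u^nm*_κ, u^cl*_κ ≤ u^cl_κ ≤ u^nm_κ, and u^nm*_κ ≤ u^nm_κ. -/

import Mathlib

open Set Cardinal

/-- `c` is a club in the well-ordered type `α` (thought of as the cardinal `κ = #α`):
it is closed (contains the supremum of each of its nonempty bounded subsets) and unbounded. -/
def IsClubIn {α : Type*} [LinearOrder α] (c : Set α) : Prop :=
  (∀ s ⊆ c, s.Nonempty → ∀ a : α, IsLUB s a → a ∈ c) ∧ ∀ a : α, ∃ b ∈ c, a < b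

/-- `x` is stationary: it meets every club. -/
def IsStatIn {α : Type*} [LinearOrder α] (x : Set α) : Prop :=
  ∀ c : Set α, IsClubIn c → (x ∩ c).Nonempty

/-- `y` stationarily splits `x`: both `x ∩ y` and `x \ y` are stationary. -/
def StatSplits {α : Type*} [LinearOrder α] (y x : Set α) : Prop :=
  IsStatIn (x ∩ y) ∧ IsStatIn (x \ y)

/-- The stationary reaping number `r^cl_κ`. -/
noncomputable def statReapingNumber (α : Type*) [LinearOrder α] : Cardinal :=
  sInf { c : Cardinal | ∃ R : Set (Set α), (∀ y ∈ R, IsStatIn y) ∧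
    (∀ x : Set α, IsStatIn x → ∃ y ∈ R, ¬ StatSplits x y) ∧ c = #R }

/-- The club filter `Cl`: sets containing a club. -/
def ClubFilterSets (α : Type*) [LinearOrder α] : Set (Set α) :=
  {x : Set α | ∃ c : Set α, IsClubIn c ∧ c ⊆ x}

/-- `U` is a measure: a uniform, `<κ`-complete ultrafilter. -/
def IsMeasureOn {α : Type*} (U : Ultrafilter α) : Prop :=
  (∀ x ∈ U, #x = #α) ∧
    ∀ F : Set (Set α), #F < #α → (∀ x ∈ F, x ∈ U) → ⋂₀ F ∈ U

/-- `U` is a normal measure: a measure closed under diagonal intersections. -/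
def IsNormalMeasureOn {α : Type*} [LinearOrder α] (U : Ultrafilter α) : Prop :=
  IsMeasureOn U ∧ ∀ f : α → Set α, (∀ i, f i ∈ U) → {k : α | ∀ i < k, k ∈ f i} ∈ U

/-- `B` is a base for the ultrafilter `U`. -/
def IsBaseFor {α : Type*} (B : Set (Set α)) (U : Ultrafilter α) : Prop :=
  (∀ b ∈ B, b ∈ U) ∧ ∀ u ∈ U, ∃ b ∈ B, b ⊆ u

/-- `{b ∩ c : b ∈ B, c ∈ Cl}`, the candidate base generated by `B` together with
the club filter. -/
def InterClubBase {α : Type*} [LinearOrder α] (B : Set (Set α)) : Set (Set α) :=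
  {y : Set α | ∃ b ∈ B, ∃ c ∈ ClubFilterSets α, y = b ∩ c}

/-- The stationary ultrafilter number `u^cl_κ`. -/
noncomputable def uCl (α : Type*) [LinearOrder α] : Cardinal :=
  sInf { c : Cardinal | ∃ B : Set (Set α), (∀ b ∈ B, IsStatIn b) ∧
    (∃ U : Ultrafilter α, IsBaseFor B U) ∧ c = #B }

/-- The stationary* ultrafilter number `u^cl*_κ`. -/
noncomputable def uClStar (α : Type*) [LinearOrder α] : Cardinal :=
  sInf { c : Cardinal | ∃ B : Set (Set α), (∀ b ∈ B, IsStatIn b) ∧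
    (∃ U : Ultrafilter α, IsBaseFor (InterClubBase B) U) ∧ c = #B }

/-- The normal measure ultrafilter number `u^nm_κ`. -/
noncomputable def uNm (α : Type*) [LinearOrder α] : Cardinal :=
  sInf { c : Cardinal | ∃ B : Set (Set α), (∀ b ∈ B, IsStatIn b) ∧
    (∃ U : Ultrafilter α, IsNormalMeasureOn U ∧ IsBaseFor B U) ∧ c = #B }

/-- The normal measure* ultrafilter number `u^nm*_κ`. -/
noncomputable def uNmStar (α : Type*) [LinearOrder α] : Cardinal :=
  sInf { c : Cardinal | ∃ B : Set (Set α), (∀ b ∈ B, IsStatIn b) ∧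
    (∃ U : Ultrafilter α, IsNormalMeasureOn U ∧ IsBaseFor (InterClubBase B) U) ∧ c = #B }


/-!
A measurable cardinal `κ` is a strong limit, so fewer than `κ` stationary sets cut `κ` into fewer
than `κ` cells according to membership pattern, and each of the given sets contains a stationary
cell. Splitting every stationary cell into two stationary halves yields one set that splits all the
given sets; hence `κ ≤ r^cl_κ`. A stationary set splits by Fodor's lemma, applied either to ladders
at its points of countable cofinality or, when those are few, to local clubs witnessing
non-reflection at its points of uncountable cofinality.

For the other inequalities: a stationary base of an ultrafilter forces every club into it, so
intersecting its members with clubs gives a base of the same ultrafilter, and a base of the form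
`{b ∩ c}` has a member that no set splits. A normal measure (the pushforward of a measure along a
minimal function with no large fibre) contains the club filter, so its members form a stationary
base and all the infima range over nonempty families.
-/

open Order Ordinal

section LinearOrder
variable {α : Type*} [LinearOrder α]

def diagInter (c : α → Set α) : Set α :=
  {k | ∀ i < k, k ∈ c i}

def accPts (c : Set α) : Set α :=
  {k | (c ∩ Iio k).Nonempty ∧ IsLUB (c ∩ Iio k) k}

def HasCountableCofinality (k : α) : Prop :=
  ∃ g : ℕ → α, (∀ n, g n < k) ∧ ∀ β < k, ∃ n, β < g n

def IsClubBelow (k : α) (w : Set α) : Prop :=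
  w ⊆ Iio k ∧ (∀ s ⊆ w, s.Nonempty → ∀ b < k, IsLUB s b → b ∈ w) ∧ ∀ β < k, ∃ j ∈ w, β < j

def StationarilySplits (x S : Set α) : Prop :=
  IsStationary (S ∩ x) ∧ IsStationary (S \ x)

theorem isClubIn_iff_isClub [NoMaxOrder α] {c : Set α} : IsClubIn c ↔ IsClub c := by
  refine ⟨fun ⟨hcl, hcof⟩ => ⟨fun d hd hne _ a ha => hcl d hd hne a ha,
    fun a => (hcof a).imp fun _ h => ⟨h.1, h.2.le⟩⟩, fun hc => ⟨?_, fun a => ?_⟩⟩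
  · exact fun s hs hne a ha => hc.isLUB_mem hs hne ha
  · obtain ⟨b, hab⟩ := exists_gt a
    obtain ⟨d, hd, hbd⟩ := hc.isCofinal b
    exact ⟨d, hd, hab.trans_le hbd⟩

theorem isStatIn_iff_isStationary [NoMaxOrder α] {x : Set α} : IsStatIn x ↔ IsStationary x := by
  simp only [IsStatIn, IsStationary, isClubIn_iff_isClub]

theorem statSplits_iff_stationarilySplits [NoMaxOrder α] {x y : Set α} :
    StatSplits y x ↔ StationarilySplits y x := by
  simp only [StatSplits, StationarilySplits, isStatIn_iff_isStationary]

theorem StationarilySplits.mono {x S T : Set α} (h : StationarilySplits x T) (hTS : T ⊆ S) :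
    StationarilySplits x S :=
  ⟨h.1.mono (inter_subset_inter_left _ hTS), h.2.mono (sdiff_subset_sdiff_left hTS)⟩

theorem isClub_Ioi [NoMaxOrder α] (a : α) : IsClub (Ioi a) := by
  refine ⟨fun s hs ⟨x, hx⟩ _ b hb => (hs hx).trans_le (hb.1 hx), fun x => ?_⟩
  obtain ⟨b, hb⟩ := exists_gt (max a x)
  exact ⟨b, (le_max_left a x).trans_lt hb, (le_max_right a x).trans hb.le⟩

theorem exists_isLUB_of_bddAbove [WellFoundedLT α] {s : Set α} (hs : BddAbove s) :
    ∃ k, IsLUB s k := by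
  obtain ⟨k, hk, hmin⟩ := wellFounded_lt.has_min _ hs
  exact ⟨k, hk, fun u hu => not_lt.1 (hmin u hu)⟩

theorem mem_accPts_of_isLUB {c s : Set α} {k : α} (hs : s ⊆ c ∩ Iio k) (hne : s.Nonempty)
    (hk : IsLUB s k) : k ∈ accPts c :=
  ⟨hne.mono hs, hk.of_subset_of_superset isLUB_Iic hs fun _ h => h.2.le⟩

theorem mem_accPts_of_forall_exists {c : Set α} {a k : α} (hak : a < k)
    (h : ∀ i < k, ∃ j ∈ c ∩ Iio k, i < j) : k ∈ accPts c :=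
  ⟨(h a hak).imp fun _ h => h.1, fun _ h => h.2.le, fun u hu => not_lt.1 fun huk =>
    let ⟨_, hj, huj⟩ := h u huk
    (hu hj).not_gt huj⟩

theorem IsClub.accPts_subset {c : Set α} (hc : IsClub c) : accPts c ⊆ c :=
  fun _ hk => hc.isLUB_mem inter_subset_left hk.1 hk.2

theorem exists_mem_accPts_of_not_hasCountableCofinality [WellFoundedLT α] {c : Set α} {k β : α}
    (hk : k ∈ accPts c) (hcof : ¬ HasCountableCofinality k) (hβ : β < k) :
    ∃ j ∈ accPts c, β < j ∧ j < k := by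
  have hnext : ∀ x : Iio k, ∃ y : Iio k, (y : α) ∈ c ∧ x < y := fun x => by
    obtain ⟨y, hy, hxy⟩ := (lt_isLUB_iff hk.2).1 x.2
    exact ⟨⟨y, hy.2⟩, hy.1, hxy⟩
  choose F hFc hF using hnext
  set g : ℕ → α := fun n => F^[n + 1] ⟨β, hβ⟩
  have hsucc : ∀ n, F^[n + 1] ⟨β, hβ⟩ = F (F^[n] ⟨β, hβ⟩) :=
    fun n => Function.iterate_succ_apply' ..
  have hmono : StrictMono g := strictMono_nat_of_lt_succ fun n => by
    simp only [g, hsucc (n + 1)]; exact hF _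
  obtain ⟨b, hbk, hb⟩ : ∃ b < k, ∀ n, g n ≤ b := by
    by_contra! h
    exact hcof ⟨g, fun n => (F^[n + 1] ⟨β, hβ⟩).2, h⟩
  obtain ⟨j, hj⟩ := exists_isLUB_of_bddAbove (s := range g) ⟨b, by rintro _ ⟨n, rfl⟩; exact hb n⟩
  refine ⟨j, mem_accPts_of_isLUB ?_ (range_nonempty g) hj, ?_,
    (hj.2 (by rintro _ ⟨n, rfl⟩; exact hb n)).trans_lt hbk⟩
  · rintro _ ⟨n, rfl⟩
    exact ⟨by simp only [g, hsucc n]; exact hFc _,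
      (hmono n.lt_succ_self).trans_le (hj.1 ⟨n + 1, rfl⟩)⟩
  · exact (show β < g 0 from hF ⟨β, hβ⟩).trans_le (hj.1 ⟨0, rfl⟩)

end LinearOrder

section RegularCardinalOrder
variable {α : Type*} [LinearOrder α] [WellFoundedLT α]

theorem IsRegularCardinalOrder.of_isRegular (hreg : (#α).IsRegular)
    (hinit : ∀ a : α, #(Iio a) < #α) : IsRegularCardinalOrder α := by
  have htype : typeLT α = (#α).ord := by
    refine le_antisymm (not_lt.1 fun h => ?_) (ord_le_type _)
    obtain ⟨x, hx⟩ := Ordinal.typein_surj _ h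
    have := congrArg Ordinal.card hx
    rw [Ordinal.card_typein, card_ord] at this
    exact (hinit x).ne this
  exact ⟨by rw [← Ordinal.cof_type, htype, hreg.cof_ord]⟩

variable [IsRegularCardinalOrder α]

theorem mk_Iio_lt_mk (a : α) : #(Iio a) < #α := mk_Iio_lt a ord_cardinalMk

theorem exists_forall_lt_of_mk_lt {s : Set α} (hs : #s < #α) : ∃ b, ∀ x ∈ s, x < b :=
  not_isCofinal_iff.1 fun h => (cof_le h).not_gt (by rwa [cof_eq_cardinalMk])

theorem noMaxOrder_of_one_lt_mk (hα : 1 < #α) : NoMaxOrder α := by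
  have : Nonempty α := mk_ne_zero_iff.1 (by rintro h; simp [h] at hα)
  rw [← noTopOrder_iff_noMaxOrder, ← Order.one_lt_cof_iff, cof_eq_cardinalMk]
  exact hα

theorem cof_ne_aleph0 (hα : ℵ₀ < #α) : cof α ≠ ℵ₀ := by
  rw [cof_eq_cardinalMk]; exact hα.ne'

theorem exists_isLUB_of_mk_lt {s : Set α} (hs : #s < #α) : ∃ k, IsLUB s k :=
  exists_isLUB_of_bddAbove <| (exists_forall_lt_of_mk_lt hs).imp fun _ h x hx => (h x hx).le

theorem exists_strictMono_isLUB_of_lt_apply (hα : ℵ₀ < #α) {F : α → α} (hF : ∀ x, x < F x)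
    (a : α) : ∃ (g : ℕ → α) (k : α), g 0 = F a ∧ (∀ n, g (n + 1) = F (g n)) ∧ StrictMono g ∧
      IsLUB (range g) k := by
  have hsucc : ∀ n, F^[n + 1] (F a) = F (F^[n] (F a)) := fun n => Function.iterate_succ_apply' ..
  obtain ⟨k, hk⟩ :=
    exists_isLUB_of_mk_lt ((countable_range fun n => F^[n] (F a)).le_aleph0.trans_lt hα)
  exact ⟨_, k, rfl, hsucc, strictMono_nat_of_lt_succ fun n => hsucc n ▸ hF _, hk⟩

variable [NoMaxOrder α]

theorem isClub_accPts (hα : ℵ₀ < #α) {c : Set α} (hc : IsClub c) : IsClub (accPts c) := by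
  refine ⟨fun s hs hne _ b hb => ?_, fun a => ?_⟩
  · by_cases hbs : b ∈ s
    · exact hs hbs
    obtain ⟨x₀, hx₀⟩ := hne
    refine mem_accPts_of_forall_exists ((hb.1 hx₀).lt_of_ne fun h => hbs (h ▸ hx₀)) fun i hi => ?_
    obtain ⟨x, hx, hix⟩ := (lt_isLUB_iff hb).1 hi
    obtain ⟨j, hj, hij⟩ := (lt_isLUB_iff (hs hx).2).1 hix
    exact ⟨j, ⟨hj.1, hj.2.trans_le (hb.1 hx)⟩, hij⟩
  · have hnext : ∀ x, ∃ y ∈ c, x < y := fun x =>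
      let ⟨x', hx'⟩ := exists_gt x
      (hc.isCofinal x').imp fun _ h => ⟨h.1, hx'.trans_le h.2⟩
    choose F hFc hF using hnext
    obtain ⟨g, k, hg0, hsucc, hmono, hk⟩ := exists_strictMono_isLUB_of_lt_apply hα hF a
    refine ⟨k, mem_accPts_of_isLUB ?_ (range_nonempty _) hk, ?_⟩
    · rintro _ ⟨n, rfl⟩
      refine ⟨?_, (hmono n.lt_succ_self).trans_le (hk.1 ⟨n + 1, rfl⟩)⟩
      cases n with
      | zero => exact hg0 ▸ hFc a
      | succ n => exact hsucc n ▸ hFc _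
    · exact (hF a).le.trans (hg0 ▸ hk.1 ⟨0, rfl⟩)

theorem isClub_diagInter (hα : ℵ₀ < #α) {c : α → Set α} (hc : ∀ i, IsClub (c i)) :
    IsClub (diagInter c) := by
  refine ⟨fun s hs _ _ b hb i hi => ?_, fun a => ?_⟩
  · obtain ⟨x, hx, hix⟩ := (lt_isLUB_iff hb).1 hi
    exact (hc i).isLUB_mem (t := s ∩ Ici x) (fun y hy => hs hy.1 i (hix.trans_le hy.2))
      ⟨x, hx, le_rfl⟩ (hb.inter_Ici_of_mem hx)
  choose e he hlt using fun i => (hc i).isCofinal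
  -- `F x` lies beyond the chosen points `e i x` of all `c i`, `i < x`, so these points accumulate
  -- at the supremum of an `F`-chain
  have hbound : ∀ x, ∃ y, x < y ∧ ∀ i < x, e i x < y := fun x => by
    obtain ⟨b, hb⟩ := exists_forall_lt_of_mk_lt
      ((mk_range_le (f := fun i : Iio x => e i x)).trans_lt (mk_Iio_lt_mk x))
    obtain ⟨x', hx'⟩ := exists_gt x
    exact ⟨max b x', hx'.trans_le (le_max_right _ _),
      fun i hi => (hb _ (mem_range_self (⟨i, hi⟩ : Iio x))).trans_le (le_max_left _ _)⟩
  choose F hF hFe using hbound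
  obtain ⟨g, k, hg0, hsucc, hmono, hk⟩ := exists_strictMono_isLUB_of_lt_apply hα hF a
  refine ⟨k, fun i hi => ?_, (hF a).le.trans (hg0 ▸ hk.1 ⟨0, rfl⟩)⟩
  obtain ⟨_, ⟨n, rfl⟩, hin⟩ := (lt_isLUB_iff hk).1 hi
  have hmem : ∀ m, i < g (n + m) := fun m => hin.trans_le (hmono.monotone (n.le_add_right m))
  refine (hc i).isLUB_mem (t := range fun m => e i (g (n + m)))
    (by rintro _ ⟨m, rfl⟩; exact he _ _) (range_nonempty _) ⟨?_, fun u hu => hk.2 ?_⟩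
  · rintro _ ⟨m, rfl⟩
    exact ((hFe _ i (hmem m)).trans_eq (hsucc _).symm).le.trans (hk.1 ⟨_, rfl⟩)
  · rintro _ ⟨m, rfl⟩
    exact (hmono.monotone (m.le_add_left n)).trans ((hlt _ _).trans (hu ⟨m, rfl⟩))

theorem IsStationary.exists_isStationary_inter_preimage_singleton (hα : ℵ₀ < #α)
    {S : Set α} (hS : IsStationary S) {f : α → α} (hf : ∀ k ∈ S, f k < k) :
    ∃ γ, IsStationary (S ∩ f ⁻¹' {γ}) := by
  by_contra! h
  simp_rw [not_isStationary_iff] at h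
  choose c hc hdisj using h
  obtain ⟨k, hkS, hkc⟩ := hS (isClub_diagInter hα hc)
  exact (hdisj (f k)).le_bot ⟨⟨hkS, rfl⟩, hkc _ (hf k hkS)⟩

theorem IsStationary.exists_stationarilySplits_of_regressive (hα : ℵ₀ < #α) {S : Set α}
    (hS : IsStationary S) {f : α → α} (hf : ∀ k ∈ S, f k < k)
    (hunb : ∀ γ, IsStationary (S ∩ {k | γ < f k})) : ∃ x, StationarilySplits x S := by
  obtain ⟨γ, hγ⟩ := hS.exists_isStationary_inter_preimage_singleton hα hf
  exact ⟨{k | γ < f k}, hunb γ, hγ.mono fun k hk => ⟨hk.1, fun h => h.ne' hk.2⟩⟩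

theorem IsStationary.exists_stationarilySplits_of_hasCountableCofinality (hα : ℵ₀ < #α)
    {S : Set α} (hS : IsStationary S) (hcof : ∀ k ∈ S, HasCountableCofinality k) :
    ∃ x, StationarilySplits x S := by
  choose! lad hlad hcofinal using hcof
  suffices ∃ n, ∀ γ, IsStationary (S ∩ {k | γ < lad k n}) from
    let ⟨n, hn⟩ := this
    hS.exists_stationarilySplits_of_regressive hα (fun k hk => hlad k hk n) hn
  -- otherwise every coordinate `n` of the ladders stays below some `γ n` on a club, and a point
  -- of that club above all the `γ n` would have a bounded ladder
  by_contra! h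
  simp_rw [not_isStationary_iff] at h
  choose γ c hc hdisj using h
  obtain ⟨b, hb⟩ := exists_forall_lt_of_mk_lt ((countable_range γ).le_aleph0.trans_lt hα)
  obtain ⟨k, hkS, hkc, hbk⟩ := hS ((IsClub.iInter_of_countable (cof_ne_aleph0 hα) hc).inter
    (cof_ne_aleph0 hα) (isClub_Ioi b))
  obtain ⟨n, hn⟩ := hcofinal k hkS b hbk
  exact (hdisj n).le_bot ⟨⟨hkS, (hb _ (mem_range_self n)).trans hn⟩, mem_iInter.1 hkc n⟩

theorem IsStationary.isStationary_setOf_isClubBelow_disjoint (hα : ℵ₀ < #α) {S : Set α}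
    (hS : IsStationary S) (hcof : ∀ k ∈ S, ¬ HasCountableCofinality k) :
    IsStationary {k ∈ S | ∃ w, IsClubBelow k w ∧ Disjoint w S} := by
  -- the least point of `S` that is a limit of `c` is a witness: the limits of `c` below it form
  -- a club in it, by its uncountable cofinality, and avoid `S` by minimality
  intro c hc
  have hM := isClub_accPts hα hc
  obtain ⟨k, ⟨hkS, hkM⟩, hmin⟩ := wellFounded_lt.has_min (S ∩ accPts c) (hS hM)
  refine ⟨k, ⟨hkS, accPts c ∩ Iio k, ⟨inter_subset_right, ?_, fun β hβ => ?_⟩, ?_⟩,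
    hc.accPts_subset hkM⟩
  · exact fun s hs hne b hbk hb => ⟨hM.isLUB_mem (hs.trans inter_subset_left) hne hb, hbk⟩
  · obtain ⟨j, hj, hβj, hjk⟩ :=
      exists_mem_accPts_of_not_hasCountableCofinality hkM (hcof k hkS) hβ
    exact ⟨j, ⟨hj, hjk⟩, hβj⟩
  · exact disjoint_left.2 fun j hj hjS => hmin j ⟨hjS, hj.1⟩ hj.2

theorem IsStationary.exists_stationarilySplits_of_isClubBelow (hα : ℵ₀ < #α) {T : Set α}
    (hT : IsStationary T) (hd : ∀ k ∈ T, ∃ w, IsClubBelow k w ∧ Disjoint w T) :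
    ∃ x, StationarilySplits x T := by
  choose! d hd hdisj using hd
  have ha : ∀ i k, ∃ j, k ∈ T → i < k → j ∈ d k ∧ i < j := fun i k => by
    by_cases h : k ∈ T ∧ i < k
    · obtain ⟨j, hj, hij⟩ := (hd k h.1).2.2 i h.2
      exact ⟨j, fun _ _ => ⟨hj, hij⟩⟩
    · exact ⟨i, fun hk hi => absurd ⟨hk, hi⟩ h⟩
  choose a ha using ha
  suffices ∃ i, ∀ γ, IsStationary ((T ∩ Ioi i) ∩ {k | γ < a i k}) by
    obtain ⟨i, hi⟩ := this
    obtain ⟨x, hx⟩ := ((hi i).mono inter_subset_left).exists_stationarilySplits_of_regressive hα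
      (fun k hk => (hd k hk.1).1 (ha i k hk.1 hk.2).1) hi
    exact ⟨x, hx.mono inter_subset_left⟩
  -- otherwise, for `k₁ < k₂` in `T` on a diagonal club, the points `a i k₂` with `i < k₁` lie
  -- below `k₁`; so `k₁` is a limit of the local club at `k₂`, which avoids `T`
  by_contra! h
  simp_rw [not_isStationary_iff] at h
  choose γ c hc hdisj' using h
  have hD : IsClub (diagInter c ∩ diagInter fun i => Ioi (γ i)) :=
    (isClub_diagInter hα hc).inter (cof_ne_aleph0 hα) (isClub_diagInter hα fun i => isClub_Ioi _)
  obtain ⟨k₀, hk₀⟩ := hT.nonempty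
  obtain ⟨k₁, hk₁T, hk₁D, hk₀₁⟩ := hT (hD.inter (cof_ne_aleph0 hα) (isClub_Ioi k₀))
  obtain ⟨k₂, hk₂T, hk₂D, hk₁₂⟩ := hT (hD.inter (cof_ne_aleph0 hα) (isClub_Ioi k₁))
  have hbelow : ∀ i < k₁, a i k₂ ∈ d k₂ ∩ Iio k₁ ∧ i < a i k₂ := fun i hi => by
    have hik₂ := hi.trans hk₁₂
    obtain ⟨hmem, hia⟩ := ha i k₂ hk₂T hik₂
    refine ⟨⟨hmem, (not_lt.1 fun hlt => ?_).trans_lt (hk₁D.2 i hi)⟩, hia⟩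
    exact disjoint_left.1 (hdisj' i) ⟨⟨hk₂T, hik₂⟩, hlt⟩ (hk₂D.1 i hik₂)
  have hacc : k₁ ∈ accPts (d k₂) :=
    mem_accPts_of_forall_exists hk₀₁ fun i hi => ⟨a i k₂, hbelow i hi⟩
  have hk₁ : k₁ ∈ d k₂ := (hd k₂ hk₂T).2.1 _ inter_subset_left hacc.1 k₁ hk₁₂ hacc.2
  exact (hdisj k₂ hk₂T).le_bot ⟨hk₁, hk₁T⟩

theorem IsStationary.exists_stationarilySplits (hα : ℵ₀ < #α) {S : Set α}
    (hS : IsStationary S) : ∃ x, StationarilySplits x S := by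
  by_cases h : IsStationary (S ∩ {k | HasCountableCofinality k})
  · exact (h.exists_stationarilySplits_of_hasCountableCofinality hα fun k hk => hk.2).imp
      fun x hx => hx.mono inter_subset_left
  have hS' : IsStationary (S \ {k | HasCountableCofinality k}) := by
    rw [← inter_union_sdiff S {k | HasCountableCofinality k}, isStationary_union_iff
      (cof_ne_aleph0 hα)] at hS
    exact hS.resolve_left h
  have hT := hS'.isStationary_setOf_isClubBelow_disjoint hα fun k hk => hk.2
  refine (hT.exists_stationarilySplits_of_isClubBelow hα fun k hk => ?_).imp
    fun x hx => hx.mono fun k hk => hk.1.1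
  exact hk.2.imp fun w hw => ⟨hw.1, hw.2.mono_right (sep_subset _ _)⟩

theorem exists_stationarilySplits_forall (hα : ℵ₀ < #α) {R : Set (Set α)} (hR : #(Set R) < #α)
    (hRS : ∀ y ∈ R, IsStationary y) : ∃ x, ∀ y ∈ R, StationarilySplits x y := by
  set cell : Set R → Set α := fun P => {k | {y : R | k ∈ (y : Set α)} = P}
  have hsplit : ∀ P, ∃ x, IsStationary (cell P) → StationarilySplits x (cell P) := fun P => by
    by_cases h : IsStationary (cell P)
    · exact (h.exists_stationarilySplits hα).imp fun _ hx _ => hx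
    · exact ⟨∅, fun h' => absurd h' h⟩
  choose x hx using hsplit
  refine ⟨⋃ P, cell P ∩ x P, fun y hy => ?_⟩
  obtain ⟨⟨P, hyP⟩, hP⟩ : ∃ P : {P : Set R // ⟨y, hy⟩ ∈ P}, IsStationary (cell P) := by
    refine (isStationary_iUnion_iff (cof_ne_aleph0 hα) ?_).1 <| (hRS y hy).mono fun k hk =>
      mem_iUnion.2 ⟨⟨_, hk⟩, rfl⟩
    simpa [cof_eq_cardinalMk] using (mk_subtype_le _).trans_lt hR
  have hcell : cell P ⊆ y := fun k hk =>
    show (⟨y, hy⟩ : R) ∈ {y : R | k ∈ (y : Set α)} from hk ▸ hyP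
  refine ⟨(hx P hP).1.mono fun k hk => ⟨hcell hk.1, mem_iUnion.2 ⟨P, hk⟩⟩,
    (hx P hP).2.mono fun k hk => ⟨hcell hk.1, fun hkx => hk.2 ?_⟩⟩
  obtain ⟨Q, hkQ, hkxQ⟩ := mem_iUnion.1 hkx
  have hQP : Q = P := hkQ.symm.trans hk.1
  exact hQP ▸ hkxQ

end RegularCardinalOrder

universe u

namespace IsMeasureOn
variable {α : Type u} {U : Ultrafilter α}

theorem compl_mem_of_mk_lt (hU : IsMeasureOn U) {x : Set α} (hx : #x < #α) : xᶜ ∈ U :=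
  Ultrafilter.compl_mem_iff_notMem.2 fun h => hx.ne (hU.1 x h)

theorem iInter_mem (hU : IsMeasureOn U) {ι : Sort*} {f : ι → Set α} (hf : #(range f) < #α)
    (h : ∀ i, f i ∈ U) : ⋂ i, f i ∈ U := by
  rw [← sInter_range]
  exact hU.2 _ hf (forall_mem_range.2 h)

theorem mk_set_lt (hU : IsMeasureOn U) (hα : 1 < #α) {β : Type u} (hβ : #β < #α) :
    #(Set β) < #α := by
  -- Ulam: completeness decides every coordinate `i ∈ β` on one large set, where an injection
  -- `α → Set β` would be constant
  by_contra! hle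
  obtain ⟨h⟩ := hle
  set A : β → Set α := fun i => {k | i ∈ h k ↔ {k' | i ∈ h k'} ∈ U}
  have hA : ∀ i, A i ∈ U := fun i => by
    by_cases hi : {k' | i ∈ h k'} ∈ U
    · exact Filter.mem_of_superset hi fun k hk => iff_of_true hk hi
    · exact Filter.mem_of_superset (Ultrafilter.compl_mem_iff_notMem.2 hi)
        fun k hk => iff_of_false hk hi
  have hmem := hU.iInter_mem (mk_range_le.trans_lt hβ) hA
  obtain ⟨⟨k₁, hk₁⟩, ⟨k₂, hk₂⟩, hne⟩ := one_lt_iff_nontrivial.1 (hU.1 _ hmem ▸ hα)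
  refine hne (Subtype.ext (h.injective (Set.ext fun i => ?_)))
  exact (mem_iInter.1 hk₁ i).trans (mem_iInter.1 hk₂ i).symm

theorem wellFounded_eventually_lt (hU : IsMeasureOn U) (hα : ℵ₀ < #α) {β : Type*} [Preorder β]
    [WellFoundedLT β] : WellFounded fun g f : α → β => ∀ᶠ k in (U : Filter α), g k < f k := by
  refine wellFounded_iff_isEmpty_descending_chain.2 ⟨fun ⟨s, hs⟩ => ?_⟩
  obtain ⟨k, hk⟩ := Ultrafilter.nonempty_of_mem
    (hU.iInter_mem ((countable_range _).le_aleph0.trans_lt hα) hs)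
  exact not_strictAnti_of_wellFoundedLT (fun n => s n k)
    (strictAnti_nat_of_succ_lt fun n => mem_iInter.1 hk n)

theorem map (hU : IsMeasureOn U) {f : α → α} (hf : ∀ γ, f ⁻¹' {γ} ∉ U) :
    IsMeasureOn (U.map f) := by
  refine ⟨fun x hx => le_antisymm (mk_set_le x) (not_lt.1 fun hlt => ?_), fun F hF hFU => ?_⟩
  · have hfib := hU.iInter_mem (f := fun γ : x => (f ⁻¹' {(γ : α)})ᶜ) (mk_range_le.trans_lt hlt)
      fun γ => Ultrafilter.compl_mem_iff_notMem.2 (hf γ)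
    obtain ⟨k, hkx, hk⟩ :=
      Ultrafilter.nonempty_of_mem (Filter.inter_mem (Ultrafilter.mem_map.1 hx) hfib)
    exact mem_iInter.1 hk ⟨f k, hkx⟩ rfl
  · rw [Ultrafilter.mem_map, preimage_sInter, ← sInter_image]
    exact hU.2 _ (mk_image_le.trans_lt hF) (forall_mem_image.2 hFU)

theorem isNormalMeasureOn_map [LinearOrder α] (hU : IsMeasureOn U) {f : α → α}
    (hf : ∀ γ, f ⁻¹' {γ} ∉ U)
    (hmin : ∀ g : α → α, (∀ γ, g ⁻¹' {γ} ∉ U) → ¬ ∀ᶠ k in (U : Filter α), g k < f k) :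
    IsNormalMeasureOn (U.map f) := by
  refine ⟨hU.map hf, fun A hA => ?_⟩
  by_contra hD
  have hZ : {k | ∃ i < f k, f k ∉ A i} ∈ U := by
    refine Filter.mem_of_superset (Ultrafilter.compl_mem_iff_notMem.2 hD) fun k hk => ?_
    simpa using hk
  -- a choice of witnesses lies below `f`, so by minimality of `f` it is constant on a large set
  choose! g hg hgA using fun k (hk : k ∈ {k | ∃ i < f k, f k ∉ A i}) => hk
  obtain ⟨γ, hγ⟩ : ∃ γ, g ⁻¹' {γ} ∈ U := by
    by_contra! h
    exact hmin g h (Filter.mem_of_superset hZ hg)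
  obtain ⟨k, ⟨hkZ, hkγ⟩, hkA⟩ :=
    Ultrafilter.nonempty_of_mem (Filter.inter_mem (Filter.inter_mem hZ hγ) (hA γ))
  exact hgA k hkZ (by rwa [hkγ])

theorem exists_isNormalMeasureOn [LinearOrder α] [WellFoundedLT α] (hU : IsMeasureOn U)
    (hα : ℵ₀ < #α) : ∃ W : Ultrafilter α, IsNormalMeasureOn W := by
  have hid : ∀ γ, id ⁻¹' {γ} ∉ U := fun γ hγ => by
    have := hU.1 _ hγ
    rw [preimage_id, mk_singleton] at this
    exact (one_lt_aleph0.trans hα).ne this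
  obtain ⟨f, hf, hmin⟩ := (hU.wellFounded_eventually_lt hα).has_min
    {f : α → α | ∀ γ, f ⁻¹' {γ} ∉ U} ⟨id, hid⟩
  exact ⟨_, hU.isNormalMeasureOn_map hf hmin⟩

end IsMeasureOn

section NormalMeasure
variable {α : Type*} [LinearOrder α] [WellFoundedLT α] [IsRegularCardinalOrder α] [NoMaxOrder α]
  {W : Ultrafilter α}

theorem IsMeasureOn.Ioi_mem (hW : IsMeasureOn W) (j : α) : Ioi j ∈ W := by
  obtain ⟨j', hj'⟩ := exists_gt j
  rw [← compl_Iic]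
  exact hW.compl_mem_of_mk_lt <|
    (mk_le_mk_of_subset fun _ h => (show _ ≤ j from h).trans_lt hj').trans_lt (mk_Iio_lt_mk j')

theorem IsNormalMeasureOn.mem_of_isClub (hW : IsNormalMeasureOn W) {c : Set α} (hc : IsClub c) :
    c ∈ W := by
  obtain ⟨j₀, -⟩ := Ultrafilter.nonempty_of_mem (f := W) Filter.univ_mem
  have hA : ∀ i, {k | ∃ j ∈ c, i < j ∧ j ≤ k} ∈ W := fun i => by
    obtain ⟨i', hi'⟩ := exists_gt i
    obtain ⟨j, hj, hij⟩ := hc.isCofinal i'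
    exact Filter.mem_of_superset (hW.1.Ioi_mem j) fun k hk => ⟨j, hj, hi'.trans_le hij, hk.le⟩
  refine Filter.mem_of_superset (Filter.inter_mem (hW.2 _ hA) (hW.1.Ioi_mem j₀))
    fun k ⟨hk, hj₀k⟩ => ?_
  by_contra hkc
  refine hkc (hc.accPts_subset (mem_accPts_of_forall_exists hj₀k fun i hi => ?_))
  obtain ⟨j, hj, hij, hjk⟩ := hk i hi
  exact ⟨j, ⟨hj, hjk.lt_of_ne fun h => hkc (h ▸ hj)⟩, hij⟩

theorem IsNormalMeasureOn.isStationary_of_mem (hW : IsNormalMeasureOn W) {x : Set α}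
    (hx : x ∈ W) : IsStationary x :=
  fun _ hc => Ultrafilter.nonempty_of_mem (Filter.inter_mem hx (hW.mem_of_isClub hc))

end NormalMeasure

section CardinalCharacteristics
variable {α : Type*} [LinearOrder α] {B : Set (Set α)} {U : Ultrafilter α}

theorem IsBaseFor.mem_of_isClubIn (hB : ∀ b ∈ B, IsStatIn b) (hBU : IsBaseFor B U) {c : Set α}
    (hc : IsClubIn c) : c ∈ U := by
  by_contra h
  obtain ⟨b, hb, hbc⟩ := hBU.2 _ (Ultrafilter.compl_mem_iff_notMem.2 h)
  obtain ⟨k, hkb, hkc⟩ := hB b hb c hc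
  exact hbc hkb hkc

theorem IsBaseFor.interClubBase [NoMaxOrder α] (hB : ∀ b ∈ B, IsStatIn b)
    (hBU : IsBaseFor B U) : IsBaseFor (InterClubBase B) U := by
  refine ⟨?_, fun u hu => ?_⟩
  · rintro _ ⟨b, hb, c, ⟨d, hd, hdc⟩, rfl⟩
    exact Filter.inter_mem (hBU.1 b hb) <|
      Filter.mem_of_superset (hBU.mem_of_isClubIn hB hd) hdc
  · obtain ⟨b, hb, hbu⟩ := hBU.2 u hu
    exact ⟨b ∩ univ, ⟨b, hb, univ, ⟨univ, isClubIn_iff_isClub.2 .univ, subset_rfl⟩, rfl⟩,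
      (inter_univ b).symm ▸ hbu⟩

theorem IsBaseFor.exists_not_statSplits (hBU : IsBaseFor (InterClubBase B) U) (x : Set α) :
    ∃ b ∈ B, ¬ StatSplits x b := by
  have hsmall : ∀ u ∈ U, ∃ b ∈ B, ¬ IsStatIn (b \ u) := fun u hu => by
    obtain ⟨_, ⟨b, hb, d, ⟨c, hc, hcd⟩, rfl⟩, hbu⟩ := hBU.2 u hu
    refine ⟨b, hb, fun hst => ?_⟩
    obtain ⟨k, ⟨hkb, hku⟩, hkc⟩ := hst c hc
    exact hku (hbu ⟨hkb, hcd hkc⟩)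
  rcases U.mem_or_compl_mem x with hx | hx
  · exact (hsmall x hx).imp fun b ⟨hb, h⟩ => ⟨hb, fun hs => h hs.2⟩
  · exact (hsmall _ hx).imp fun b ⟨hb, h⟩ =>
      ⟨hb, fun hs => h (by rw [sdiff_compl]; exact hs.1)⟩

theorem mk_le_of_forall_exists_not_statSplits [WellFoundedLT α] [IsRegularCardinalOrder α]
    [NoMaxOrder α] (hα : ℵ₀ < #α) (hU : IsMeasureOn U) {R : Set (Set α)}
    (hR : ∀ y ∈ R, IsStatIn y) (hreap : ∀ x, IsStatIn x → ∃ y ∈ R, ¬ StatSplits x y) :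
    #α ≤ #R := by
  by_contra! hlt
  have : Nonempty α := mk_ne_zero_iff.1 (aleph0_pos.trans hα).ne'
  obtain ⟨x, hx⟩ := exists_stationarilySplits_forall hα
    (hU.mk_set_lt (one_lt_aleph0.trans hα) hlt) fun y hy => isStatIn_iff_isStationary.1 (hR y hy)
  obtain ⟨y, hy, -⟩ := hreap univ (isStatIn_iff_isStationary.2 .univ)
  obtain ⟨z, hz, hxz⟩ :=
    hreap x (isStatIn_iff_isStationary.2 ((hx y hy).1.mono inter_subset_right))
  exact hxz (statSplits_iff_stationarilySplits.2 (hx z hz))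

end CardinalCharacteristics

/-- For a measurable cardinal `κ`:
`κ ≤ r^cl_κ ≤ u^cl*_κ ≤ u^nm*_κ`, `u^cl*_κ ≤ u^cl_κ ≤ u^nm_κ` and `u^nm*_κ ≤ u^nm_κ`.
Here `κ` is represented as a well-ordered type `α` of regular uncountable cardinality,
all of whose proper initial segments are of size `< #α`, carrying a measure. -/
theorem ultrafilterNumber_inequalities {α : Type*} [LinearOrder α] [WellFoundedLT α]
    (hreg : (#α).IsRegular) (hunc : ℵ₀ < #α)
    (hinit : ∀ a : α, #(Set.Iio a) < #α)
    (hmeas : ∃ U : Ultrafilter α, IsMeasureOn U) :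
    #α ≤ statReapingNumber α ∧ statReapingNumber α ≤ uClStar α ∧
      uClStar α ≤ uNmStar α ∧ uClStar α ≤ uCl α ∧ uCl α ≤ uNm α ∧ uNmStar α ≤ uNm α := by
  have := IsRegularCardinalOrder.of_isRegular hreg hinit
  have := noMaxOrder_of_one_lt_mk (one_lt_aleph0.trans hunc)
  obtain ⟨U, hU⟩ := hmeas
  obtain ⟨W, hW⟩ := hU.exists_isNormalMeasureOn hunc
  have hWstat : ∀ x ∈ {x | x ∈ W}, IsStatIn x :=
    fun _ hx => isStatIn_iff_isStationary.2 (hW.isStationary_of_mem hx)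
  have hWbase : IsBaseFor {x | x ∈ W} W := ⟨fun _ hx => hx, fun u hu => ⟨u, hu, subset_rfl⟩⟩
  have hWbase' := hWbase.interClubBase hWstat
  refine ⟨le_csInf ⟨_, _, hWstat, fun x _ => hWbase'.exists_not_statSplits x, rfl⟩ ?_,
    le_csInf ⟨_, _, hWstat, ⟨W, hWbase'⟩, rfl⟩ ?_,
    csInf_le_csInf (OrderBot.bddBelow _) ⟨_, _, hWstat, ⟨W, hW, hWbase'⟩, rfl⟩ ?_,
    le_csInf ⟨_, _, hWstat, ⟨W, hWbase⟩, rfl⟩ ?_,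
    csInf_le_csInf (OrderBot.bddBelow _) ⟨_, _, hWstat, ⟨W, hW, hWbase⟩, rfl⟩ ?_,
    le_csInf ⟨_, _, hWstat, ⟨W, hW, hWbase⟩, rfl⟩ ?_⟩
  · rintro _ ⟨R, hR, hreap, rfl⟩
    exact mk_le_of_forall_exists_not_statSplits hunc hU hR hreap
  · rintro _ ⟨B, hB, ⟨V, hBV⟩, rfl⟩
    exact csInf_le' ⟨B, hB, fun x _ => hBV.exists_not_statSplits x, rfl⟩
  · rintro _ ⟨B, hB, ⟨V, -, hBV⟩, rfl⟩
    exact ⟨B, hB, ⟨V, hBV⟩, rfl⟩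
  · rintro _ ⟨B, hB, ⟨V, hBV⟩, rfl⟩
    exact csInf_le' ⟨B, hB, ⟨V, hBV.interClubBase hB⟩, rfl⟩
  · rintro _ ⟨B, hB, ⟨V, -, hBV⟩, rfl⟩
    exact ⟨B, hB, ⟨V, hBV⟩, rfl⟩
  · rintro _ ⟨B, hB, ⟨V, hV, hBV⟩, rfl⟩
    exact csInf_le' ⟨B, hB, ⟨V, hV, hBV.interClubBase hB⟩, rfl⟩
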